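/- For every α > 0 and every z > 0, the modified Bessel function of the first kind satisfies 1 + α²/z² − (I_α'(z)/I_α(z))² > 0. -/

import Mathlib

/-!
With `u n = (z/2)^(2n+α) / (n! Γ(n+α+1)) > 0` we have `I_α(z) = ∑ u n` and `z I_α'(z) = ∑ (2n+α) u n`,
while the recurrence `4 (n+1)(n+1+α) u (n+1) = z² u n` gives `∑ (2n+α)² u n = (z² + α²) ∑ u n`.
The claim is therefore the strict Cauchy–Schwarz inequality `(∑ (2n+α) u n)² < (∑ u n)(∑ (2n+α)² u n)`
for the non-constant sequence `2n+α` and the positive weights `u`.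
-/

open Real Filter

noncomputable def Ib (α z : ℝ) : ℝ :=
  ∑' n : ℕ, (z / 2) ^ (2 * (n : ℝ) + α) / ((n.factorial : ℝ) * Real.Gamma ((n : ℝ) + α + 1))

theorem sq_tsum_mul_lt_tsum_mul_tsum {ι : Type*} {w a : ι → ℝ} (hw : ∀ i, 0 < w i)
    (h₀ : Summable w) (h₁ : Summable fun i => a i * w i) (h₂ : Summable fun i => a i ^ 2 * w i)
    {i j : ι} (hij : a i ≠ a j) :
    (∑' i, a i * w i) ^ 2 < (∑' i, w i) * ∑' i, a i ^ 2 * w i := by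
  set S₀ := ∑' i, w i
  set S₁ := ∑' i, a i * w i
  set S₂ := ∑' i, a i ^ 2 * w i
  set μ := S₁ / S₀
  have hS₀ : 0 < S₀ := h₀.tsum_pos (fun i => (hw i).le) i (hw i)
  have hexpand : (fun i => w i * (a i - μ) ^ 2) =
      fun i => a i ^ 2 * w i - 2 * μ * (a i * w i) + μ ^ 2 * w i := by
    funext i; ring
  have hsummable : Summable fun i => w i * (a i - μ) ^ 2 := by
    rw [hexpand]; exact (h₂.sub (h₁.mul_left _)).add (h₀.mul_left _)
  have hvariance : ∑' i, w i * (a i - μ) ^ 2 = S₂ - 2 * μ * S₁ + μ ^ 2 * S₀ := by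
    rw [hexpand, (h₂.sub (h₁.mul_left _)).tsum_add (h₀.mul_left _), h₂.tsum_sub (h₁.mul_left _),
      tsum_mul_left, tsum_mul_left]
  obtain ⟨k, hk⟩ : ∃ k, a k - μ ≠ 0 := by
    by_contra! h
    exact hij (by linarith [h i, h j])
  have hpos : 0 < ∑' i, w i * (a i - μ) ^ 2 :=
    hsummable.tsum_pos (fun i => mul_nonneg (hw i).le (sq_nonneg _)) k
      (mul_pos (hw k) (by positivity))
  rw [hvariance] at hpos
  have hμ : μ * S₀ = S₁ := div_mul_cancel₀ _ hS₀.ne'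
  nlinarith [mul_pos hS₀ hpos]

noncomputable def besselTerm (α x : ℝ) (n : ℕ) : ℝ :=
  x ^ (2 * (n : ℝ) + α) / ((n.factorial : ℝ) * Gamma ((n : ℝ) + α + 1))

theorem Ib_eq_tsum_besselTerm (α z : ℝ) : Ib α z = ∑' n, besselTerm α (z / 2) n := rfl

section BesselTerm

variable {α x : ℝ}

theorem factorial_mul_Gamma_pos (hα : -1 < α) (n : ℕ) :
    0 < (n.factorial : ℝ) * Gamma ((n : ℝ) + α + 1) :=
  mul_pos (mod_cast n.factorial_pos) (Gamma_pos_of_pos (by linarith [n.cast_nonneg (α := ℝ)]))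

theorem besselTerm_pos (hα : -1 < α) (hx : 0 < x) (n : ℕ) : 0 < besselTerm α x n :=
  div_pos (rpow_pos_of_pos hx _) (factorial_mul_Gamma_pos hα n)

theorem besselTerm_succ (hα : -1 < α) (hx : 0 < x) (n : ℕ) :
    ((n : ℝ) + 1) * ((n : ℝ) + α + 1) * besselTerm α x (n + 1) = x ^ 2 * besselTerm α x n := by
  have hfactorial : ((n + 1).factorial : ℝ) = ((n : ℝ) + 1) * n.factorial := by
    rw [Nat.factorial_succ]; push_cast; ring
  have hGamma : Gamma (((n + 1 : ℕ) : ℝ) + α + 1) = ((n : ℝ) + α + 1) * Gamma ((n : ℝ) + α + 1) := by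
    rw [← Gamma_add_one (by linarith [n.cast_nonneg (α := ℝ)])]; push_cast; ring_nf
  have hpow : x ^ (2 * ((n + 1 : ℕ) : ℝ) + α) = x ^ 2 * x ^ (2 * (n : ℝ) + α) := by
    rw [← rpow_two, ← rpow_add hx]; push_cast; ring_nf
  have hD := factorial_mul_Gamma_pos hα n
  have hn : (0 : ℝ) < (n : ℝ) + 1 := by positivity
  have hnα : (0 : ℝ) < (n : ℝ) + α + 1 := by linarith [n.cast_nonneg (α := ℝ)]
  unfold besselTerm
  rw [hfactorial, hGamma, hpow]
  field_simp

theorem besselTerm_le_besselTerm (hα : 0 ≤ α) (hx : 0 ≤ x) {y : ℝ} (hxy : x ≤ y) (n : ℕ) :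
    besselTerm α x n ≤ besselTerm α y n :=
  div_le_div_of_nonneg_right (rpow_le_rpow hx hxy (by positivity))
    (factorial_mul_Gamma_pos (by linarith) n).le

theorem summable_pow_mul_besselTerm (hα : 0 < α) (hx : 0 < x) (k : ℕ) :
    Summable fun n : ℕ => (2 * (n : ℝ) + α) ^ k * besselTerm α x n := by
  have hα' : -1 < α := by linarith
  refine summable_of_ratio_norm_eventually_le (r := 1 / 2) (by norm_num) ?_
  filter_upwards [eventually_ge_atTop (max 1 ⌈2 ^ (k + 1) * x ^ 2⌉₊)] with n hn
  have hn₁ : (1 : ℝ) ≤ n := mod_cast le_of_max_le_left hn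
  have hnx : 2 ^ (k + 1) * x ^ 2 ≤ n := Nat.ceil_le.mp (le_of_max_le_right hn)
  have ht := besselTerm_pos hα' hx n
  have ht' := besselTerm_pos hα' hx (n + 1)
  set D := ((n : ℝ) + 1) * ((n : ℝ) + α + 1)
  have hD : 0 < D := by positivity
  have hsucc : besselTerm α x (n + 1) = x ^ 2 / D * besselTerm α x n := by
    rw [div_mul_eq_mul_div, eq_div_iff hD.ne', mul_comm, besselTerm_succ hα' hx]
  have hweight : (2 * ((n + 1 : ℕ) : ℝ) + α) ^ k ≤ 2 ^ k * (2 * (n : ℝ) + α) ^ k := by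
    rw [← mul_pow]; exact pow_le_pow_left₀ (by positivity) (by push_cast; linarith) k
  have hratio : 2 ^ k * x ^ 2 / D ≤ 1 / 2 := by
    rw [div_le_iff₀ hD]
    nlinarith [pow_succ (2 : ℝ) k]
  rw [Real.norm_of_nonneg (by positivity), Real.norm_of_nonneg (by positivity)]
  calc (2 * ((n + 1 : ℕ) : ℝ) + α) ^ k * besselTerm α x (n + 1)
      ≤ 2 ^ k * (2 * (n : ℝ) + α) ^ k * besselTerm α x (n + 1) :=
        mul_le_mul_of_nonneg_right hweight ht'.le
    _ = 2 ^ k * x ^ 2 / D * ((2 * (n : ℝ) + α) ^ k * besselTerm α x n) := by rw [hsucc]; ring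
    _ ≤ 1 / 2 * ((2 * (n : ℝ) + α) ^ k * besselTerm α x n) :=
        mul_le_mul_of_nonneg_right hratio (by positivity)

theorem summable_besselTerm (hα : 0 < α) (hx : 0 < x) : Summable (besselTerm α x) := by
  simpa using summable_pow_mul_besselTerm hα hx 0

theorem summable_mul_besselTerm (hα : 0 < α) (hx : 0 < x) :
    Summable fun n : ℕ => (2 * (n : ℝ) + α) * besselTerm α x n := by
  simpa using summable_pow_mul_besselTerm hα hx 1

theorem tsum_sq_mul_besselTerm (hα : 0 < α) (hx : 0 < x) :
    ∑' n : ℕ, (2 * (n : ℝ) + α) ^ 2 * besselTerm α x n =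
      ((2 * x) ^ 2 + α ^ 2) * ∑' n, besselTerm α x n := by
  set g : ℕ → ℝ := fun n => ((2 * (n : ℝ) + α) ^ 2 - α ^ 2) * besselTerm α x n
  have hS₀ := summable_besselTerm hα hx
  have hS₂ := summable_pow_mul_besselTerm hα hx 2
  have hg : Summable g := by
    simpa only [g, sub_mul] using hS₂.sub (hS₀.mul_left (α ^ 2))
  have hg_succ (n : ℕ) : g (n + 1) = (2 * x) ^ 2 * besselTerm α x n := by
    simp only [g]
    -- `(2n + 2 + α)² - α² = 4 (n + 1)(n + α + 1)`
    rw [mul_pow, mul_assoc, ← besselTerm_succ (by linarith) hx n]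
    push_cast; ring
  have htsum_g : ∑' n, g n = (2 * x) ^ 2 * ∑' n, besselTerm α x n := by
    rw [hg.tsum_eq_zero_add]
    simp only [hg_succ, tsum_mul_left]
    simp [g]
  have hsplit : (fun n : ℕ => (2 * (n : ℝ) + α) ^ 2 * besselTerm α x n) =
      fun n => g n + α ^ 2 * besselTerm α x n := by
    funext n; simp only [g]; ring
  rw [hsplit, hg.tsum_add (hS₀.mul_left _), tsum_mul_left, htsum_g]
  ring

end BesselTerm

theorem hasDerivAt_besselTerm_half (α : ℝ) (n : ℕ) {y : ℝ} (hy : 0 < y) :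
    HasDerivAt (fun y => besselTerm α (y / 2) n)
      ((2 * (n : ℝ) + α) * besselTerm α (y / 2) n / y) y := by
  have hy₂ : 0 < y / 2 := half_pos hy
  have hpow : HasDerivAt (fun y : ℝ => (y / 2) ^ (2 * (n : ℝ) + α))
      (1 / 2 * (2 * (n : ℝ) + α) * (y / 2) ^ (2 * (n : ℝ) + α - 1)) y :=
    ((hasDerivAt_id' y).div_const 2).rpow_const (Or.inl hy₂.ne')
  refine (hpow.div_const ((n.factorial : ℝ) * Gamma ((n : ℝ) + α + 1))).congr_deriv ?_
  rw [rpow_sub hy₂, rpow_one]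
  unfold besselTerm
  field_simp

theorem hasDerivAt_Ib {α z : ℝ} (hα : 0 < α) (hz : 0 < z) :
    HasDerivAt (Ib α) ((∑' n : ℕ, (2 * (n : ℝ) + α) * besselTerm α (z / 2) n) / z) z := by
  have hbound (n : ℕ) (y : ℝ) (hy : y ∈ Set.Ioo (z / 2) (z + 1)) :
      ‖(2 * (n : ℝ) + α) * besselTerm α (y / 2) n / y‖ ≤
        2 / z * ((2 * (n : ℝ) + α) * besselTerm α ((z + 1) / 2) n) := by
    have hy₀ : 0 < y := (half_pos hz).trans hy.1
    have hterm_y := besselTerm_pos (α := α) (by linarith) (half_pos hy₀) n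
    have hterm_z := besselTerm_pos (α := α) (by linarith) (by linarith : 0 < (z + 1) / 2) n
    rw [Real.norm_of_nonneg (by positivity)]
    calc (2 * (n : ℝ) + α) * besselTerm α (y / 2) n / y
        ≤ (2 * (n : ℝ) + α) * besselTerm α ((z + 1) / 2) n / y := by
          gcongr
          exact besselTerm_le_besselTerm hα.le (by linarith) (by linarith [hy.2]) n
      _ ≤ (2 * (n : ℝ) + α) * besselTerm α ((z + 1) / 2) n / (z / 2) := by
          gcongr
          exact hy.1.le
      _ = 2 / z * ((2 * (n : ℝ) + α) * besselTerm α ((z + 1) / 2) n) := by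
          field_simp
  have hz_mem : z ∈ Set.Ioo (z / 2) (z + 1) := ⟨by linarith, by linarith⟩
  have hsum := hasDerivAt_tsum_of_isPreconnected
    ((summable_mul_besselTerm hα (by linarith : 0 < (z + 1) / 2)).mul_left (2 / z))
    isOpen_Ioo isPreconnected_Ioo
    (fun n y hy => hasDerivAt_besselTerm_half α n ((half_pos hz).trans hy.1)) hbound hz_mem
    (summable_besselTerm hα (half_pos hz)) hz_mem
  rwa [tsum_div_const] at hsum

/-- For every `α > 0` and `z > 0`, `1 + α²/z² − (I_α'(z)/I_α(z))² > 0`. -/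
theorem stmt2 (α : ℝ) (hα : 0 < α) (z : ℝ) (hz : 0 < z) :
    0 < 1 + α ^ 2 / z ^ 2 - (deriv (Ib α) z / Ib α z) ^ 2 := by
  have hz₂ : 0 < z / 2 := half_pos hz
  have hterm := besselTerm_pos (α := α) (by linarith) hz₂
  have hS₀ := summable_besselTerm hα hz₂
  have hI : 0 < ∑' n, besselTerm α (z / 2) n := hS₀.tsum_pos (fun n => (hterm n).le) 0 (hterm 0)
  have hCS := sq_tsum_mul_lt_tsum_mul_tsum (a := fun n : ℕ => 2 * (n : ℝ) + α) hterm hS₀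
    (summable_mul_besselTerm hα hz₂) (summable_pow_mul_besselTerm hα hz₂ 2)
    (i := 0) (j := 1) (by norm_num)
  rw [tsum_sq_mul_besselTerm hα hz₂, show 2 * (z / 2) = z by ring] at hCS
  rw [(hasDerivAt_Ib hα hz).deriv, Ib_eq_tsum_besselTerm, div_div, div_pow, mul_pow, sub_pos,
    div_lt_iff₀ (by positivity)]
  calc (∑' n : ℕ, (2 * (n : ℝ) + α) * besselTerm α (z / 2) n) ^ 2
      < (z ^ 2 + α ^ 2) * (∑' n, besselTerm α (z / 2) n) ^ 2 := hCS.trans_eq (by ring)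
    _ = (1 + α ^ 2 / z ^ 2) * (z ^ 2 * (∑' n, besselTerm α (z / 2) n) ^ 2) := by
      field_simp
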